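/- arXiv:1605.07968 — 2 statements merged into one kernel-verified Lean document; each statement's English description precedes it below -/
import Mathlib

section
/- For every real q with 0 < q < 1 and every complex x with Re x > 0, the q-Barnes function satisfies G_q(x) = exp( Σ_{p=1}^∞ (1/p) [ (1/2)(1−x)(2−x) q^p + (1−x) q^p/(1 − q^p) − (q^{xp} − q^p)/(1 − q^p)² ] ), where the series on the right converges absolutely. -/
open Complex

/-- The infinite q-Pochhammer symbol `(a; q) = ∏_{n=0}^∞ (1 - a qⁿ)`. -/
noncomputable def qPoch (a : ℂ) (q : ℝ) : ℂ := ∏' n : ℕ, (1 - a * (q : ℂ) ^ n)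

/-- The double q-factorial `(a; q, q) = ∏_{n,m=0}^∞ (1 - a q^{n+m})`. -/
noncomputable def qPoch2 (a : ℂ) (q : ℝ) : ℂ := ∏' p : ℕ × ℕ, (1 - a * (q : ℂ) ^ (p.1 + p.2))

/-- `q^x = exp(x log q)` for the positive real `q`. -/
noncomputable def qpow (q : ℝ) (x : ℂ) : ℂ := Complex.exp (x * (Real.log q : ℂ))

/-- The real number `(q; q) = ∏_{n=0}^∞ (1 - q·qⁿ)`. -/
noncomputable def qPochR (q : ℝ) : ℝ := ∏' n : ℕ, (1 - q * q ^ n)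

/-- The q-Barnes function `G_q(x) = (1−q)^{−(1−x)(2−x)/2} (q;q)^{x−1} (q^x;q,q)/(q;q,q)`. -/
noncomputable def qBarnes (q : ℝ) (x : ℂ) : ℂ :=
  Complex.exp (-((1 - x) * (2 - x) / 2) * (Real.log (1 - q) : ℂ)) *
    Complex.exp ((x - 1) * (Real.log (qPochR q) : ℂ)) *
    qPoch2 (qpow q x) q / qPoch2 (q : ℂ) q

/-!
Taking logarithms, every factor `1 - c r` of the products defining `G_q` expands as
`-∑_{p ≥ 1} (c r)^p / p`. All the resulting double series are absolutely summable, so the sum over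
the product index can be moved inside the sum over `p`, where it becomes a geometric series:
`∑_n q^{np} = (1 - q^p)⁻¹` for `(q;q)` and `∑_{n,m} q^{(n+m)p} = (1 - q^p)⁻²` for `(·;q,q)`.
The prefactor `(1 - q)^{…}` contributes `log (1 - q) = -∑ q^p / p` directly.
-/

theorem hasSum_log_one_sub_mul {ι : Type*} {r : ι → ℂ} {c : ℂ} (hr : Summable (‖r ·‖))
    (hr1 : ∀ i, ‖r i‖ ≤ 1) (hc : ‖c‖ < 1) :
    ∃ s, HasSum (fun i ↦ log (1 - c * r i)) s ∧
      HasSum (fun p : ℕ ↦ -(c ^ (p + 1) / (p + 1)) * ∑' i, r i ^ (p + 1)) s := by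
  have hcr (i : ι) : ‖c * r i‖ < 1 := by
    rw [norm_mul]; exact (mul_le_of_le_one_right (norm_nonneg c) (hr1 i)).trans_lt hc
  set g : ι × ℕ → ℂ := fun z ↦ -((c * r z.1) ^ (z.2 + 1) / (z.2 + 1))
  have hg : Summable g := by
    refine (hr.mul_of_nonneg (summable_geometric_of_lt_one (norm_nonneg c) hc)
      (fun _ ↦ norm_nonneg _) (fun _ ↦ by positivity)).of_norm_bounded fun ⟨i, p⟩ ↦ ?_
    have hp : (1 : ℝ) ≤ ‖(p : ℂ) + 1‖ := by
      rw [← Nat.cast_add_one, Complex.norm_natCast]; exact_mod_cast Nat.le_add_left 1 p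
    calc ‖g (i, p)‖ = ‖c * r i‖ ^ (p + 1) / ‖(p : ℂ) + 1‖ := by simp [g, norm_pow]
      _ ≤ ‖c * r i‖ ^ p * ‖c * r i‖ := div_le_self (by positivity) hp |>.trans_eq (pow_succ ..)
      _ ≤ ‖c‖ ^ p * ‖r i‖ := by
        rw [norm_mul]
        gcongr
        · exact mul_le_of_le_one_right (norm_nonneg c) (hr1 i)
        · exact mul_le_of_le_one_left (norm_nonneg _) hc.le
      _ = ‖r i‖ * ‖c‖ ^ p := mul_comm ..
  obtain ⟨s, hs⟩ := hg
  refine ⟨s, hs.prod_fiberwise fun i ↦ ?_, ?_⟩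
  · simpa [g] using (hasSum_taylorSeries_neg_log' (hcr i)).neg
  · refine ((Equiv.prodComm ℕ ι).hasSum_iff.mpr hs).prod_fiberwise fun p ↦ ?_
    have hrp : Summable fun i ↦ r i ^ (p + 1) := .of_norm_bounded hr fun i ↦ by
      rw [norm_pow]; exact pow_le_of_le_one (norm_nonneg _) (hr1 i) p.succ_ne_zero
    simpa [g, mul_pow, mul_div_right_comm] using (hrp.hasSum.mul_left (-(c ^ (p + 1) / (p + 1))))

section

variable {q : ℝ}

lemma norm_ofReal_pow_lt_one (hq0 : 0 < q) (hq1 : q < 1) (n : ℕ) : ‖(q : ℂ) ^ (n + 1)‖ < 1 := by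
  rw [norm_pow, norm_real, Real.norm_of_nonneg hq0.le]
  exact pow_lt_one₀ hq0.le hq1 n.succ_ne_zero

lemma summable_norm_ofReal_pow (hq0 : 0 < q) (hq1 : q < 1) :
    Summable fun n : ℕ ↦ ‖(q : ℂ) ^ n‖ := by
  simpa [norm_pow, Real.norm_of_nonneg hq0.le] using summable_geometric_of_lt_one hq0.le hq1

lemma tsum_pow_add_eq_inv_sq {s : ℂ} (hs : ‖s‖ < 1) :
    ∑' nm : ℕ × ℕ, s ^ (nm.1 + nm.2) = (1 - s)⁻¹ ^ 2 := by
  have h : Summable fun n : ℕ ↦ ‖s ^ n‖ := by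
    simpa [norm_pow] using summable_geometric_of_lt_one (norm_nonneg s) hs
  simp_rw [pow_add]
  rw [← tsum_mul_tsum_of_summable_norm h h, tsum_geometric_of_norm_lt_one hs, sq]

lemma hasSum_log_qPochR (hq0 : 0 < q) (hq1 : q < 1) :
    HasSum (fun p : ℕ ↦ -((q : ℂ) ^ (p + 1) / (p + 1)) / (1 - (q : ℂ) ^ (p + 1)))
      (Real.log (qPochR q)) := by
  have hpos (n : ℕ) : 0 < 1 - q * q ^ n := by
    rw [← pow_succ', sub_pos]; exact pow_lt_one₀ hq0.le hq1 n.succ_ne_zero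
  have hlog (n : ℕ) : log (1 - q * (q : ℂ) ^ n) = Real.log (1 - q * q ^ n) := by
    rw [ofReal_log (hpos n).le]; push_cast; rfl
  obtain ⟨s, hs, hp⟩ := hasSum_log_one_sub_mul (c := q) (summable_norm_ofReal_pow hq0 hq1)
    (fun n ↦ by simpa [norm_pow, Real.norm_of_nonneg hq0.le] using pow_le_one₀ hq0.le hq1.le)
    (by simpa [Real.norm_of_nonneg hq0.le] using hq1)
  obtain ⟨t, ht⟩ : Summable fun n ↦ Real.log (1 - q * q ^ n) :=
    Complex.summable_ofReal.mp (by simpa only [hlog] using hs.summable)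
  have hqt : qPochR q = Real.exp t := (Real.hasProd_of_hasSum_log hpos ht).tprod_eq
  have hst : s = (Real.log (qPochR q) : ℂ) := by
    rw [hqt, Real.log_exp]
    exact hs.unique (by simpa only [hlog] using Complex.hasSum_ofReal.mpr ht)
  rw [← hst]
  refine hp.congr_fun fun p ↦ ?_
  simp_rw [← pow_mul, mul_comm _ (p + 1), pow_mul]
  rw [tsum_geometric_of_norm_lt_one (norm_ofReal_pow_lt_one hq0 hq1 p), div_eq_mul_inv]

lemma exists_qPoch2_eq_exp (hq0 : 0 < q) (hq1 : q < 1) {c : ℂ} (hc : ‖c‖ < 1) :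
    ∃ s, qPoch2 c q = exp s ∧
      HasSum (fun p : ℕ ↦ -(c ^ (p + 1) / (p + 1)) / (1 - (q : ℂ) ^ (p + 1)) ^ 2) s := by
  have hr : Summable fun nm : ℕ × ℕ ↦ ‖(q : ℂ) ^ (nm.1 + nm.2)‖ := by
    simp_rw [pow_add, norm_mul]
    exact (summable_norm_ofReal_pow hq0 hq1).mul_of_nonneg (summable_norm_ofReal_pow hq0 hq1)
      (fun _ ↦ norm_nonneg _) (fun _ ↦ norm_nonneg _)
  have hr1 (nm : ℕ × ℕ) : ‖(q : ℂ) ^ (nm.1 + nm.2)‖ ≤ 1 := by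
    simpa [norm_pow, Real.norm_of_nonneg hq0.le] using pow_le_one₀ hq0.le hq1.le
  obtain ⟨s, hs, hp⟩ := hasSum_log_one_sub_mul hr hr1 hc
  refine ⟨s, (hasProd_of_hasSum_log (fun nm ↦ ?_) hs).tprod_eq, hp.congr_fun fun p ↦ ?_⟩
  · have hlt : ‖c * (q : ℂ) ^ (nm.1 + nm.2)‖ < 1 :=
      (norm_mul_le _ _).trans_lt (mul_lt_one_of_nonneg_of_lt_one_left (norm_nonneg c) hc (hr1 nm))
    exact sub_ne_zero.mpr fun h ↦ by simp [← h] at hlt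
  · simp_rw [← pow_mul, mul_comm _ (p + 1), pow_mul]
    rw [tsum_pow_add_eq_inv_sq (norm_ofReal_pow_lt_one hq0 hq1 p), div_eq_mul_inv, inv_pow]

lemma norm_qpow_lt_one (hq0 : 0 < q) (hq1 : q < 1) {x : ℂ} (hx : 0 < x.re) :
    ‖qpow q x‖ < 1 := by
  rw [qpow, norm_exp, Real.exp_lt_one_iff, re_mul_ofReal]
  exact mul_neg_of_pos_of_neg hx (Real.log_neg hq0 hq1)

lemma qpow_mul_natCast (q : ℝ) (x : ℂ) (n : ℕ) : qpow q (x * n) = qpow q x ^ n := by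
  rw [qpow, qpow, ← exp_nat_mul]; ring_nf

end

/-- For `0 < q < 1` and `Re x > 0`,
`G_q(x) = exp( Σ_{p≥1} (1/p) [ (1/2)(1−x)(2−x) q^p + (1−x) q^p/(1 − q^p)
  − (q^{xp} − q^p)/(1 − q^p)² ] )`, the series converging absolutely. -/
theorem qBarnes_eq_exp_tsum (q : ℝ) (hq0 : 0 < q) (hq1 : q < 1) (x : ℂ) (hx : 0 < x.re) :
    Summable (fun p : ℕ =>
      ‖(1 / ((p : ℂ) + 1)) *
        ((1 / 2) * (1 - x) * (2 - x) * (q : ℂ) ^ (p + 1) +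
          (1 - x) * (q : ℂ) ^ (p + 1) / (1 - (q : ℂ) ^ (p + 1)) -
          (qpow q (x * ((p : ℂ) + 1)) - (q : ℂ) ^ (p + 1)) / (1 - (q : ℂ) ^ (p + 1)) ^ 2)‖) ∧
    qBarnes q x = Complex.exp (∑' p : ℕ,
      (1 / ((p : ℂ) + 1)) *
        ((1 / 2) * (1 - x) * (2 - x) * (q : ℂ) ^ (p + 1) +
          (1 - x) * (q : ℂ) ^ (p + 1) / (1 - (q : ℂ) ^ (p + 1)) -
          (qpow q (x * ((p : ℂ) + 1)) - (q : ℂ) ^ (p + 1)) / (1 - (q : ℂ) ^ (p + 1)) ^ 2)) := by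
  have hq : ‖(q : ℂ)‖ < 1 := by simpa [Real.norm_of_nonneg hq0.le] using hq1
  obtain ⟨sx, hGx, hsx⟩ := exists_qPoch2_eq_exp hq0 hq1 (norm_qpow_lt_one hq0 hq1 hx)
  obtain ⟨s1, hG1, hs1⟩ := exists_qPoch2_eq_exp hq0 hq1 hq
  have hsum := (((hasSum_taylorSeries_neg_log' hq).mul_left ((1 - x) * (2 - x) / 2)).add
    ((hasSum_log_qPochR hq0 hq1).mul_left (x - 1))).add hsx |>.sub hs1
  have hG : qBarnes q x =
      exp ((1 - x) * (2 - x) / 2 * -log (1 - q) + (x - 1) * Real.log (qPochR q) + sx - s1) := by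
    rw [qBarnes, hGx, hG1, ofReal_log (by linarith), ofReal_sub, ofReal_one, ← exp_add, ← exp_add,
      ← exp_sub]
    ring_nf
  rw [hG, ← hsum.tsum_eq]
  refine ⟨summable_norm_iff.mpr (hsum.summable.congr fun p ↦ ?_),
    congrArg exp (tsum_congr fun p ↦ ?_)⟩ <;>
  · rw [← Nat.cast_add_one, qpow_mul_natCast, Nat.cast_add_one]
    ring
end

section
/- For every real q with 0 < q < 1 and every complex x with |x| < 1, one has ∏_{m=0}^∞ (1 − x q^{4m+2})/(1 − x q^{4m}) = exp( Σ_{n=1}^∞ xⁿ / ( n (1 + q^{2n}) ) ), both the infinite product and the series converging absolutely. -/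
/-!
Taking logarithms, `log ((1 - b rᵐ) / (1 - a rᵐ)) = ∑ₙ (aⁿ⁺¹ - bⁿ⁺¹) rᵐ⁽ⁿ⁺¹⁾ / (n + 1)`.
The double series over `(m, n)` converges absolutely, so it may be summed over `m` first, which is
geometric and gives `∑ₙ (aⁿ⁺¹ - bⁿ⁺¹) / ((n + 1) (1 - rⁿ⁺¹))`. For `a = x`, `b = x q²`, `r = q⁴`
the factor `1 - q⁴⁽ⁿ⁺¹⁾ = (1 - q²⁽ⁿ⁺¹⁾) (1 + q²⁽ⁿ⁺¹⁾)` cancels against `xⁿ⁺¹ (1 - q²⁽ⁿ⁺¹⁾)`.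
The resulting series converges absolutely because unconditional summability in `ℂ` is absolute.
-/

open Complex

section
variable {a b r : ℂ}

lemma norm_pow_lt_one {w : ℂ} (hw : ‖w‖ < 1) {n : ℕ} (hn : n ≠ 0) : ‖w ^ n‖ < 1 := by
  rw [norm_pow]; exact pow_lt_one₀ (norm_nonneg _) hw hn

lemma one_sub_ne_zero_of_norm_lt_one {w : ℂ} (hw : ‖w‖ < 1) : 1 - w ≠ 0 := fun h => by
  rw [← sub_eq_zero.1 h, norm_one] at hw; exact lt_irrefl _ hw

lemma one_add_ne_zero_of_norm_lt_one {w : ℂ} (hw : ‖w‖ < 1) : 1 + w ≠ 0 := by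
  simpa using one_sub_ne_zero_of_norm_lt_one (w := -w) (by rwa [norm_neg])

lemma norm_pow_succ_div_succ_le (w : ℂ) (n : ℕ) : ‖w ^ (n + 1) / (n + 1)‖ ≤ ‖w‖ ^ (n + 1) := by
  rw [norm_div, norm_pow]
  refine div_le_self (by positivity) ?_
  rw [← Nat.cast_add_one, Complex.norm_natCast]
  exact_mod_cast n.succ_pos

lemma norm_mul_pow_lt_one (ha : ‖a‖ < 1) (hr : ‖r‖ ≤ 1) (m : ℕ) : ‖a * r ^ m‖ < 1 := by
  rw [norm_mul, norm_pow]
  exact mul_lt_one_of_nonneg_of_lt_one_left (norm_nonneg _) ha (pow_le_one₀ (norm_nonneg _) hr)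

lemma summable_pow_succ_div_succ_geometric (ha : ‖a‖ < 1) (hr : ‖r‖ < 1) :
    Summable (fun p : ℕ × ℕ => (a * r ^ p.1) ^ (p.2 + 1) / (p.2 + 1)) := by
  have hbound : Summable (fun p : ℕ × ℕ => ‖r‖ ^ p.1 * ‖a‖ ^ (p.2 + 1)) :=
    (summable_geometric_of_lt_one (norm_nonneg _) hr).mul_of_nonneg
      ((summable_nat_add_iff 1).2 (summable_geometric_of_lt_one (norm_nonneg _) ha))
      (fun _ => by positivity) (fun _ => by positivity)
  refine hbound.of_norm_bounded fun ⟨m, n⟩ => (norm_pow_succ_div_succ_le _ n).trans ?_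
  calc ‖a * r ^ m‖ ^ (n + 1) = (‖r‖ ^ m) ^ (n + 1) * ‖a‖ ^ (n + 1) := by
        rw [norm_mul, norm_pow, mul_pow, mul_comm]
    _ ≤ ‖r‖ ^ m * ‖a‖ ^ (n + 1) := by
        gcongr
        exact pow_le_of_le_one (by positivity) (pow_le_one₀ (norm_nonneg _) hr.le) n.succ_ne_zero

lemma cexp_neg_log_one_sub_sub {u v : ℂ} (hu : ‖u‖ < 1) (hv : ‖v‖ < 1) :
    cexp (-log (1 - u) - -log (1 - v)) = (1 - v) / (1 - u) := by
  rw [neg_sub_neg, exp_sub, exp_log (one_sub_ne_zero_of_norm_lt_one hv),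
    exp_log (one_sub_ne_zero_of_norm_lt_one hu)]

theorem exists_hasSum_and_hasProd_div_one_sub_mul_pow (ha : ‖a‖ < 1) (hb : ‖b‖ < 1)
    (hr : ‖r‖ < 1) : ∃ T,
      HasSum (fun n : ℕ => (a ^ (n + 1) - b ^ (n + 1)) / ((n + 1) * (1 - r ^ (n + 1)))) T ∧
      HasProd (fun m : ℕ => (1 - b * r ^ m) / (1 - a * r ^ m)) (cexp T) := by
  set f : ℕ → ℕ → ℂ := fun m n =>
    (a * r ^ m) ^ (n + 1) / (n + 1) - (b * r ^ m) ^ (n + 1) / (n + 1)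
  have hT := ((summable_pow_succ_div_succ_geometric ha hr).sub
    (summable_pow_succ_div_succ_geometric hb hr)).hasSum
  have hrow : ∀ m, HasSum (f m) (-log (1 - a * r ^ m) - -log (1 - b * r ^ m)) := fun m =>
    (hasSum_taylorSeries_neg_log' (norm_mul_pow_lt_one ha hr.le m)).sub
      (hasSum_taylorSeries_neg_log' (norm_mul_pow_lt_one hb hr.le m))
  have hcol : ∀ n, HasSum (fun m => f m n)
      ((a ^ (n + 1) - b ^ (n + 1)) / ((n + 1) * (1 - r ^ (n + 1)))) := by
    intro n
    have key := (hasSum_geometric_of_norm_lt_one (norm_pow_lt_one hr n.succ_ne_zero)).mul_left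
      ((a ^ (n + 1) - b ^ (n + 1)) / (n + 1))
    rw [show (fun m => f m n) = fun m => (a ^ (n + 1) - b ^ (n + 1)) / (n + 1) * (r ^ (n + 1)) ^ m
      from funext fun m => by simp only [f]; ring, div_mul_eq_div_div, div_eq_mul_inv _ (1 - _)]
    exact key
  refine ⟨_, ((Equiv.prodComm ℕ ℕ).hasSum_iff.2 hT).prod_fiberwise hcol, ?_⟩
  convert (hT.prod_fiberwise hrow).cexp using 1
  funext m
  exact (cexp_neg_log_one_sub_sub (norm_mul_pow_lt_one ha hr.le m)
    (norm_mul_pow_lt_one hb hr.le m)).symm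

end

lemma exists_hasSum_and_hasProd_odd_div_even {x s : ℂ} (hx : ‖x‖ < 1) (hs : ‖s‖ < 1) : ∃ T,
    HasSum (fun n : ℕ => x ^ (n + 1) / ((n + 1) * (1 + s ^ (n + 1)))) T ∧
    HasProd (fun m : ℕ => (1 - x * s ^ (2 * m + 1)) / (1 - x * s ^ (2 * m))) (cexp T) := by
  obtain ⟨T, hT, hP⟩ := exists_hasSum_and_hasProd_div_one_sub_mul_pow (b := x * s) (r := s ^ 2) hx
    (by simpa using norm_mul_pow_lt_one hx hs.le 1) (norm_pow_lt_one hs two_ne_zero)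
  refine ⟨T, hT.congr_fun fun n => ?_, ?_⟩
  · have ht := norm_pow_lt_one hs n.succ_ne_zero
    have h1 := one_sub_ne_zero_of_norm_lt_one ht
    have h2 := one_add_ne_zero_of_norm_lt_one ht
    rw [mul_pow, ← pow_mul, mul_comm 2, pow_mul]
    generalize s ^ (n + 1) = t at *
    rw [show 1 - t ^ 2 = (1 - t) * (1 + t) by ring]
    field_simp
  · convert hP using 3 with m <;> ring

/-- For `0 < q < 1` and `|x| < 1`,
`∏_{m=0}^∞ (1 − x q^{4m+2})/(1 − x q^{4m}) = exp( Σ_{n≥1} xⁿ/(n(1 + q^{2n})) )`,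
with the product and the series converging absolutely. -/
theorem prod_eq_exp_tsum_resummation (q : ℝ) (hq0 : 0 < q) (hq1 : q < 1) (x : ℂ)
    (hx : ‖x‖ < 1) :
    Multipliable (fun m : ℕ =>
      (1 - x * (q : ℂ) ^ (4 * m + 2)) / (1 - x * (q : ℂ) ^ (4 * m))) ∧
    Summable (fun n : ℕ =>
      ‖x ^ (n + 1) / (((n : ℂ) + 1) * (1 + (q : ℂ) ^ (2 * (n + 1))))‖) ∧
    (∏' m : ℕ, (1 - x * (q : ℂ) ^ (4 * m + 2)) / (1 - x * (q : ℂ) ^ (4 * m))) =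
      Complex.exp (∑' n : ℕ, x ^ (n + 1) / (((n : ℂ) + 1) * (1 + (q : ℂ) ^ (2 * (n + 1))))) := by
  have hs : ‖(q : ℂ) ^ 2‖ < 1 := by
    refine norm_pow_lt_one ?_ two_ne_zero
    rwa [norm_real, Real.norm_of_nonneg hq0.le]
  obtain ⟨T, hT, hP⟩ := exists_hasSum_and_hasProd_odd_div_even hx hs
  simp only [← pow_mul, show ∀ m : ℕ, 2 * (2 * m + 1) = 4 * m + 2 by omega,
    show ∀ m : ℕ, 2 * (2 * m) = 4 * m by omega] at hT hP
  exact ⟨hP.multipliable, summable_norm_iff.2 hT.summable, by rw [hP.tprod_eq, hT.tsum_eq]⟩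
end
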